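/- Let k ≤ d+1 be positive integers and H a k-uniform hypergraph with a total order ≺ on its vertices. If H is not (d+2)-interlacing with respect to ≺, then for any injective order-respecting map φ: V(H) → γ_d into the moment curve, for every pair of hyperedges e_1, e_2 of H we have conv(φ(e_1)) ∩ conv(φ(e_2)) = conv(φ(e_1) ∩ φ(e_2)); i.e., H is geometrically embeddable on the moment curve in R^d. -/

import Mathlib

/-- The moment curve in ℝ^d. -/
noncomputable def momentCurve (d : ℕ) (t : ℝ) : Fin d → ℝ := fun i => t ^ ((i : ℕ) + 1)

/-- A hypergraph (given by its edge set `E`) on a linearly ordered vertex type is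
`l`-interlacing if there are two distinct hyperedges `e₁ ≠ e₂` and vertices
`v 0 ≺ v 1 ≺ ⋯ ≺ v (l-1)` alternating between `e₁` (1-based odd positions)
and `e₂` (1-based even positions). -/
def IsInterlacing {V : Type*} [LinearOrder V] (E : Set (Finset V)) (l : ℕ) : Prop :=
  ∃ e₁ ∈ E, ∃ e₂ ∈ E, e₁ ≠ e₂ ∧ ∃ v : Fin l → V, StrictMono v ∧
    ∀ i : Fin l, (Even (i : ℕ) → v i ∈ e₁) ∧ (¬ Even (i : ℕ) → v i ∈ e₂)

/-!
Write `x` as a convex combination `∑ λ_v γ(φ v)` over `e₁` and as `∑ μ_v γ(φ v)` over `e₂`.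
The signed weights `ν = λ - μ` annihilate every polynomial of degree `≤ d` evaluated along
`φ`. If `ν ≠ 0`, choose a polynomial whose sign follows that of `ν` with one root per sign
change of `ν`: it cannot annihilate `ν`, so `ν` has at least `d + 1` sign changes, and its
positive part lives in `e₁`, its negative part in `e₂` — a `(d + 2)`-interlacing. Hence
`ν = 0`, and `x` is a convex combination of the common vertices. The same count, applied
to an affine dependence among at most `d + 1` points of the curve, gives affine independence.
-/

open Finset Polynomial

section Interlaces

variable {V : Type*} [LinearOrder V]

def Interlaces (A B : Finset V) (l : ℕ) : Prop :=
  ∃ v : Fin l → V, StrictMono v ∧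
    ∀ i : Fin l, (Even (i : ℕ) → v i ∈ A) ∧ (¬ Even (i : ℕ) → v i ∈ B)

theorem Interlaces.mono {A B A' B' : Finset V} {l : ℕ} (h : Interlaces A B l)
    (hA : A ⊆ A') (hB : B ⊆ B') : Interlaces A' B' l := by
  obtain ⟨v, hv, hAB⟩ := h
  exact ⟨v, hv, fun i => ⟨fun he => hA ((hAB i).1 he), fun ho => hB ((hAB i).2 ho)⟩⟩

theorem Interlaces.cons {A B : Finset V} {l : ℕ} {a : V}
    (h : Interlaces {v ∈ B | a < v} {v ∈ A | a < v} l) (ha : a ∈ A) :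
    Interlaces A B (l + 1) := by
  obtain ⟨v, hv, hBA⟩ := h
  refine ⟨Fin.cons a v, Fin.strictMono_cons.2 ⟨fun j => ?_, hv⟩, Fin.cases ?_ fun i => ?_⟩
  · by_cases hj : Even (j : ℕ)
    · exact (mem_filter.1 ((hBA j).1 hj)).2
    · exact (mem_filter.1 ((hBA j).2 hj)).2
  · simpa using ha
  · simp only [Fin.cons_succ, Fin.val_succ, Nat.even_add_one, not_not]
    exact ⟨fun ho => (mem_filter.1 ((hBA i).2 ho)).1, fun he => (mem_filter.1 ((hBA i).1 he)).1⟩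

theorem Interlaces.le_card [Fintype V] {A B : Finset V} {l : ℕ} (h : Interlaces A B l) :
    l ≤ Fintype.card V := by
  obtain ⟨v, hv, -⟩ := h
  simpa using Fintype.card_le_of_injective v hv.injective

end Interlaces

section SignChanges

variable {V : Type*} [LinearOrder V] {t : V → ℝ}

/-- Positivity to the left of `s` is the invariant that keeps the sign of `p` under control
when the induction adds the root `t a` at the first negative point `a` of `ν`. -/
theorem exists_nonneg_polynomial_of_not_interlaces (ht : StrictMono t) (n : ℕ) (s : Finset V)
    (ν : V → ℝ) (h : ¬ Interlaces {v ∈ s | ν v < 0} {v ∈ s | 0 < ν v} (n + 1)) :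
    ∃ p : ℝ[X], p.natDegree ≤ n ∧ (∀ v ∈ s, 0 ≤ ν v * p.eval (t v)) ∧
      ∀ x, (∀ v ∈ s, x < t v) → 0 < p.eval x := by
  induction n generalizing s ν with
  | zero =>
    refine ⟨1, by simp, fun v hv => ?_, fun _ _ => by simp⟩
    by_contra hνv
    refine h ⟨fun _ => v, Fin.strictMono_iff_lt_succ.2 finZeroElim,
      fun i => ⟨fun _ => ?_, fun hi => ?_⟩⟩
    · simpa [hv] using hνv
    · simp [Fin.fin_one_eq_zero i] at hi
  | succ n ih =>
    by_cases hnonneg : ∀ v ∈ s, 0 ≤ ν v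
    · exact ⟨1, by simp, fun v hv => by simpa using hnonneg v hv, fun _ _ => by simp⟩
    push Not at hnonneg
    obtain ⟨b, hbs, hb⟩ := hnonneg
    obtain ⟨a, ha, hmin⟩ := exists_min_image {v ∈ s | ν v < 0} id ⟨b, mem_filter.2 ⟨hbs, hb⟩⟩
    obtain ⟨has, hνa⟩ := mem_filter.1 ha
    have h' : ¬ Interlaces {v ∈ {v ∈ s | a < v} | (-ν) v < 0}
        {v ∈ {v ∈ s | a < v} | 0 < (-ν) v} (n + 1) := by
      refine fun hI => h (Interlaces.cons (hI.mono ?_ ?_) ha) <;>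
        · intro v; simp only [mem_filter, Pi.neg_apply, neg_neg_iff_pos, neg_pos]; tauto
    obtain ⟨q, hqdeg, hq, hqpos⟩ := ih _ _ h'
    refine ⟨q * (C (t a) - X), ?_, fun v hv => ?_, fun x hx => ?_⟩
    · calc (q * (C (t a) - X)).natDegree ≤ q.natDegree + (C (t a) - X).natDegree :=
            natDegree_mul_le
        _ ≤ n + 1 := by
            have : (C (t a) - X).natDegree ≤ 1 := by
              rw [← neg_sub, natDegree_neg, natDegree_X_sub_C]
            omega
    · simp only [eval_mul, eval_sub, eval_C, eval_X]
      rcases lt_trichotomy v a with hva | rfl | hav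
      · have hνv : 0 ≤ ν v := by
          by_contra hνv
          exact (hmin v (mem_filter.2 ⟨hv, not_le.1 hνv⟩)).not_gt hva
        have hqv : 0 < q.eval (t v) :=
          hqpos _ fun u hu => ht (hva.trans (mem_filter.1 hu).2)
        have := sub_pos.2 (ht hva)
        positivity
      · simp
      · have hqv := hq v (mem_filter.2 ⟨hv, hav⟩)
        simp only [Pi.neg_apply, neg_mul, neg_nonneg] at hqv
        rw [← mul_assoc]
        exact mul_nonneg_of_nonpos_of_nonpos hqv (sub_neg.2 (ht hav)).le
    · rw [eval_mul, eval_sub, eval_C, eval_X]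
      exact mul_pos (hqpos x fun u hu => hx u (mem_filter.1 hu).1) (sub_pos.2 (hx a has))

theorem interlaces_of_sum_mul_eval_eq_zero_of_pos (ht : StrictMono t) {s : Finset V}
    {ν : V → ℝ} {d : ℕ}
    (hν : ∀ p : ℝ[X], p.natDegree ≤ d → ∑ v ∈ s, ν v * p.eval (t v) = 0)
    {a : V} (has : a ∈ s) (hνa : 0 < ν a) (hmin : ∀ v ∈ s, v < a → ν v = 0) :
    Interlaces {v ∈ s | 0 < ν v} {v ∈ s | ν v < 0} (d + 2) := by
  by_contra h
  have h' : ¬ Interlaces {v ∈ {v ∈ s | a < v} | ν v < 0} {v ∈ {v ∈ s | a < v} | 0 < ν v}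
      (d + 1) := by
    refine fun hI => h (Interlaces.cons (hI.mono ?_ ?_) (mem_filter.2 ⟨has, hνa⟩)) <;>
      · intro v; simp only [mem_filter]; tauto
  obtain ⟨q, hqdeg, hq, hqpos⟩ := exists_nonneg_polynomial_of_not_interlaces ht d _ _ h'
  have hqa : 0 < q.eval (t a) := hqpos _ fun u hu => ht (mem_filter.1 hu).2
  have hsum : 0 < ∑ v ∈ s, ν v * q.eval (t v) := by
    refine sum_pos' (fun v hv => ?_) ⟨a, has, mul_pos hνa hqa⟩
    rcases lt_trichotomy v a with hva | rfl | hav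
    · simp [hmin v hv hva]
    · exact (mul_pos hνa hqa).le
    · exact hq v (mem_filter.2 ⟨hv, hav⟩)
  exact hsum.ne' (hν q hqdeg)

theorem interlaces_of_sum_mul_eval_eq_zero (ht : StrictMono t) {s : Finset V} {ν : V → ℝ}
    {d : ℕ} (hν : ∀ p : ℝ[X], p.natDegree ≤ d → ∑ v ∈ s, ν v * p.eval (t v) = 0)
    (hne : ∃ v ∈ s, ν v ≠ 0) :
    Interlaces {v ∈ s | 0 < ν v} {v ∈ s | ν v < 0} (d + 2) ∨
      Interlaces {v ∈ s | ν v < 0} {v ∈ s | 0 < ν v} (d + 2) := by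
  obtain ⟨b, hb, hνb⟩ := hne
  obtain ⟨a, ha, hmin⟩ := exists_min_image {v ∈ s | ν v ≠ 0} id ⟨b, mem_filter.2 ⟨hb, hνb⟩⟩
  obtain ⟨has, hνa⟩ := mem_filter.1 ha
  have hmin' : ∀ v ∈ s, v < a → ν v = 0 := fun v hv hva => by
    by_contra hνv
    exact (hmin v (mem_filter.2 ⟨hv, hνv⟩)).not_gt hva
  rcases hνa.lt_or_gt with hνa | hνa
  · right
    have hν' : ∀ p : ℝ[X], p.natDegree ≤ d → ∑ v ∈ s, (-ν) v * p.eval (t v) = 0 := by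
      intro p hp
      simp [hν p hp]
    simpa using interlaces_of_sum_mul_eval_eq_zero_of_pos ht hν' has (neg_pos.2 hνa)
      (fun v hv hva => by simp [hmin' v hv hva])
  · exact .inl (interlaces_of_sum_mul_eval_eq_zero_of_pos ht hν has hνa hmin')

end SignChanges

theorem sum_mul_eval_eq_zero_of_sum_smul_momentCurve {ι : Type*} {s : Finset ι} {t w : ι → ℝ}
    {d : ℕ} (hw₀ : ∑ i ∈ s, w i = 0) (hw : ∑ i ∈ s, w i • momentCurve d (t i) = 0)
    (p : ℝ[X]) (hp : p.natDegree ≤ d) : ∑ i ∈ s, w i * p.eval (t i) = 0 := by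
  have hpow : ∀ j ≤ d, ∑ i ∈ s, w i * t i ^ j = 0 := by
    rintro (_ | j) hj
    · simpa using hw₀
    · simpa [momentCurve, Finset.sum_apply] using congrFun hw ⟨j, hj⟩
  simp_rw [eval_eq_sum_range' (Nat.lt_succ_of_le hp), mul_sum]
  rw [sum_comm]
  refine sum_eq_zero fun j hj => ?_
  simp_rw [mul_left_comm (w _), ← mul_sum]
  rw [hpow j (Nat.lt_succ_iff.1 (mem_range.1 hj)), mul_zero]

theorem exists_weights_of_mem_convexHull_image {ι E : Type*} [AddCommGroup E] [Module ℝ E]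
    {s : Finset ι} {f : ι → E} {x : E} (hx : x ∈ convexHull ℝ (f '' s)) :
    ∃ w : ι → ℝ, (∀ i, 0 ≤ w i) ∧ (∀ i ∉ s, w i = 0) ∧ ∑ i ∈ s, w i = 1 ∧
      ∑ i ∈ s, w i • f i = x := by
  classical
  refine convexHull_min (t := {x | ∃ w : ι → ℝ, (∀ i, 0 ≤ w i) ∧ (∀ i ∉ s, w i = 0) ∧
    ∑ i ∈ s, w i = 1 ∧ ∑ i ∈ s, w i • f i = x}) ?_ ?_ hx
  · rintro _ ⟨i, hi : i ∈ s, rfl⟩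
    refine ⟨Pi.single i 1, fun j => ?_, fun j hj => ?_, by simp [hi],
      by simp [Pi.single_apply, hi]⟩
    · by_cases hji : j = i <;> simp [hji]
    · simp [show j ≠ i from fun h => hj (h ▸ hi)]
  · rintro _ ⟨w, hw₀, hwz, hw₁, rfl⟩ _ ⟨w', hw₀', hwz', hw₁', rfl⟩ a b ha hb hab
    refine ⟨a • w + b • w', fun i => ?_, fun i hi => ?_, ?_, ?_⟩
    · have := hw₀ i; have := hw₀' i
      simp only [Pi.add_apply, Pi.smul_apply, smul_eq_mul]
      positivity
    · simp [hwz i hi, hwz' i hi]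
    · simp [sum_add_distrib, ← mul_sum, hw₁, hw₁', hab]
    · simp [add_smul, mul_smul, sum_add_distrib, ← smul_sum]

theorem affineIndependent_momentCurve {ι : Type*} [LinearOrder ι] [Fintype ι] {t : ι → ℝ}
    (ht : StrictMono t) {d : ℕ} (hcard : Fintype.card ι ≤ d + 1) :
    AffineIndependent ℝ (fun i => momentCurve d (t i)) := by
  rw [affineIndependent_iff]
  intro s w hw₀ hw i hi
  by_contra hwi
  have hchain := interlaces_of_sum_mul_eval_eq_zero ht
    (sum_mul_eval_eq_zero_of_sum_smul_momentCurve hw₀ hw) ⟨i, hi, hwi⟩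
  have := hchain.elim Interlaces.le_card Interlaces.le_card
  omega

theorem convexHull_inter_convexHull_momentCurve {V : Type*} [LinearOrder V] {φ : V → ℝ}
    (hφ : StrictMono φ) {d : ℕ} {e₁ e₂ : Finset V} (h₁₂ : ¬ Interlaces e₁ e₂ (d + 2))
    (h₂₁ : ¬ Interlaces e₂ e₁ (d + 2)) :
    convexHull ℝ ((fun v => momentCurve d (φ v)) '' (e₁ : Set V)) ∩
        convexHull ℝ ((fun v => momentCurve d (φ v)) '' (e₂ : Set V)) =
      convexHull ℝ ((fun v => momentCurve d (φ v)) '' ((e₁ : Set V) ∩ (e₂ : Set V))) := by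
  classical
  set f : V → (Fin d → ℝ) := fun v => momentCurve d (φ v)
  refine subset_antisymm ?_ (Set.subset_inter
    (convexHull_mono (Set.image_mono Set.inter_subset_left))
    (convexHull_mono (Set.image_mono Set.inter_subset_right)))
  rintro x ⟨hx₁, hx₂⟩
  obtain ⟨l, hl₀, hlz, hl₁, hlx⟩ := exists_weights_of_mem_convexHull_image hx₁
  obtain ⟨m, hm₀, hmz, hm₁, hmx⟩ := exists_weights_of_mem_convexHull_image hx₂
  have hl : ∑ v ∈ e₁ ∪ e₂, l v = 1 ∧ ∑ v ∈ e₁ ∪ e₂, l v • f v = x := by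
    rw [← hl₁, ← hlx]
    exact ⟨(sum_subset subset_union_left fun v _ hv => hlz v hv).symm,
      (sum_subset subset_union_left fun v _ hv => by simp [hlz v hv]).symm⟩
  have hm : ∑ v ∈ e₁ ∪ e₂, m v = 1 ∧ ∑ v ∈ e₁ ∪ e₂, m v • f v = x := by
    rw [← hm₁, ← hmx]
    exact ⟨(sum_subset subset_union_right fun v _ hv => hmz v hv).symm,
      (sum_subset subset_union_right fun v _ hv => by simp [hmz v hv]).symm⟩
  have hmom := sum_mul_eval_eq_zero_of_sum_smul_momentCurve (s := e₁ ∪ e₂) (w := l - m) (t := φ)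
    (d := d) (by simp [sum_sub_distrib, hl.1, hm.1]) (by
      simp only [Pi.sub_apply, sub_smul, sum_sub_distrib]
      exact sub_eq_zero.2 (hl.2.trans hm.2.symm))
  by_cases hne : ∃ v ∈ e₁ ∪ e₂, (l - m) v ≠ 0
  · exfalso
    have hpos : {v ∈ e₁ ∪ e₂ | 0 < (l - m) v} ⊆ e₁ := fun v hv => by
      by_contra hv₁
      have := hm₀ v
      simp [hlz v hv₁] at hv
      linarith
    have hneg : {v ∈ e₁ ∪ e₂ | (l - m) v < 0} ⊆ e₂ := fun v hv => by
      by_contra hv₂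
      have := hl₀ v
      simp [hmz v hv₂] at hv
      linarith
    rcases interlaces_of_sum_mul_eval_eq_zero hφ hmom hne with h | h
    · exact h₁₂ (h.mono hpos hneg)
    · exact h₂₁ (h.mono hneg hpos)
  push Not at hne
  have hlz' : ∀ v ∈ e₁, v ∉ e₁ ∩ e₂ → l v = 0 := fun v hv₁ hv => by
    have hv₂ : v ∉ e₂ := fun hv₂ => hv (mem_inter.2 ⟨hv₁, hv₂⟩)
    simpa [hmz v hv₂, sub_eq_zero] using hne v (mem_union_left _ hv₁)
  have h₁ : ∑ v ∈ e₁ ∩ e₂, l v = 1 := by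
    rw [← hl₁]
    exact sum_subset inter_subset_left hlz'
  have hx : ∑ v ∈ e₁ ∩ e₂, l v • f v = x := by
    rw [← hlx]
    exact sum_subset inter_subset_left fun v hv₁ hv => by simp [hlz' v hv₁ hv]
  rw [← hx, ← centerMass_eq_of_sum_1 _ _ h₁, ← coe_inter]
  exact centerMass_mem_convexHull _ (fun v _ => hl₀ v) (by rw [h₁]; exact one_pos)
    fun v hv => Set.mem_image_of_mem f hv

theorem stmt_5_general {V : Type*} [LinearOrder V] (d k : ℕ) (hkd : k ≤ d + 1)
    (E : Set (Finset V)) (hunif : ∀ e ∈ E, e.card = k)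
    (hninter : ¬ IsInterlacing E (d + 2))
    (φ : V → ℝ) (hφ : StrictMono φ) :
    (∀ e ∈ E, AffineIndependent ℝ (fun v : e => momentCurve d (φ v))) ∧
    ∀ e₁ ∈ E, ∀ e₂ ∈ E,
      convexHull ℝ ((fun v => momentCurve d (φ v)) '' (e₁ : Set V)) ∩
        convexHull ℝ ((fun v => momentCurve d (φ v)) '' (e₂ : Set V)) =
      convexHull ℝ ((fun v => momentCurve d (φ v)) '' ((e₁ : Set V) ∩ (e₂ : Set V))) := by
  refine ⟨fun e he => ?_, fun e₁ he₁ e₂ he₂ => ?_⟩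
  · exact affineIndependent_momentCurve (hφ.comp (Subtype.strictMono_coe _))
      (by simpa [hunif e he] using hkd)
  · by_cases h : e₁ = e₂
    · subst h
      simp only [Set.inter_self]
    exact convexHull_inter_convexHull_momentCurve hφ
      (fun hI => hninter ⟨e₁, he₁, e₂, he₂, h, hI⟩)
      (fun hI => hninter ⟨e₂, he₂, e₁, he₁, Ne.symm h, hI⟩)

/-- If a k-uniform hypergraph (1 ≤ k ≤ d+1) is NOT (d+2)-interlacing,
then any order-respecting placement of its vertices on the moment curve γ_d is a
geometric embedding: convex hulls of hyperedges intersect exactly in the convex hull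
of their common vertices (and each hyperedge image is affinely independent). -/
theorem stmt_5 {V : Type*} [LinearOrder V] (d k : ℕ) (hk : 1 ≤ k) (hkd : k ≤ d + 1)
    (E : Set (Finset V)) (hunif : ∀ e ∈ E, e.card = k)
    (hninter : ¬ IsInterlacing E (d + 2))
    (φ : V → ℝ) (hφ : StrictMono φ) :
    (∀ e ∈ E, AffineIndependent ℝ (fun v : e => momentCurve d (φ v))) ∧
    ∀ e₁ ∈ E, ∀ e₂ ∈ E,
      convexHull ℝ ((fun v => momentCurve d (φ v)) '' (e₁ : Set V)) ∩
        convexHull ℝ ((fun v => momentCurve d (φ v)) '' (e₂ : Set V)) =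
      convexHull ℝ ((fun v => momentCurve d (φ v)) '' ((e₁ : Set V) ∩ (e₂ : Set V))) :=
  stmt_5_general d k hkd E hunif hninter φ hφ
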